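/- arXiv:2112.13323 — 3 statements merged into one kernel-verified Lean document; each statement's English description precedes it below -/
import Mathlib

section
/- For w > 0, B > 0, if 0 < L < (B/w)·ln 2 then the derivative of q̂(L) = (1 − exp(−w·L/B))^L with respect to L is strictly negative; that is, q̂ is strictly decreasing on (0, (B/w)·ln 2). -/
/-!
With `t = w L / B` we have `log q̂ = (B / w) · t · log (1 - e^{-t})`, so `q̂'(L)` has the sign of
`g(t) = log (1 - e^{-t}) + t / (e^t - 1)`, the derivative of `t ↦ t log (1 - e^{-t})`.
Now `g (log 2) = 0` and `g'(t) = ((2 - t) e^t - 2) / (e^t - 1)²`, which is positive for `0 < t < 1`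
since `e^t ≥ 1 + t` and `(2 - t)(1 + t) > 2`; as `log 2 < 1`, `g < 0` on `(0, log 2)`.
-/

open Real

lemma two_lt_two_sub_mul_exp {s : ℝ} (hs₀ : 0 < s) (hs₁ : s < 1) : 2 < (2 - s) * exp s :=
  calc 2 < (2 - s) * (s + 1) := by nlinarith
    _ ≤ (2 - s) * exp s := mul_le_mul_of_nonneg_left (add_one_le_exp s) (by linarith)

lemma one_sub_exp_neg_pos {s : ℝ} (hs : 0 < s) : 0 < 1 - exp (-s) := by
  simpa using exp_lt_one_iff.mpr (neg_neg_of_pos hs)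

lemma exp_sub_one_pos {s : ℝ} (hs : 0 < s) : 0 < exp s - 1 :=
  sub_pos.mpr (one_lt_exp_iff.mpr hs)

/-- The function `g` above. -/
noncomputable def iouLogSlope (s : ℝ) : ℝ := log (1 - exp (-s)) + s / (exp s - 1)

lemma hasDerivAt_iouLogSlope {s : ℝ} (hs : 0 < s) :
    HasDerivAt iouLogSlope (((2 - s) * exp s - 2) / (exp s - 1) ^ 2) s := by
  have hexp := (exp_sub_one_pos hs).ne'
  have hlog : HasDerivAt (fun s => log (1 - exp (-s))) (exp (-s) / (1 - exp (-s))) s := by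
    simpa using (((hasDerivAt_neg s).exp).const_sub 1).log (one_sub_exp_neg_pos hs).ne'
  have hfrac := (hasDerivAt_id' s).div ((hasDerivAt_exp s).sub_const 1) hexp
  refine (hlog.add hfrac).congr_deriv ?_
  have : 1 - exp (-s) ≠ 0 := (one_sub_exp_neg_pos hs).ne'
  rw [exp_neg] at this ⊢
  field_simp
  ring

lemma iouLogSlope_log_two : iouLogSlope (log 2) = 0 := by
  norm_num [iouLogSlope, exp_neg, exp_log]
  rw [one_div, log_inv, neg_add_cancel]

lemma iouLogSlope_neg {t : ℝ} (ht₀ : 0 < t) (ht₁ : t < log 2) : iouLogSlope t < 0 := by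
  have hlog2 : log 2 < 1 := by linarith [log_two_lt_d9]
  have hmono : StrictMonoOn iouLogSlope (Set.Ioo 0 1) := by
    refine strictMonoOn_of_deriv_pos (convex_Ioo 0 1)
      (fun s hs => (hasDerivAt_iouLogSlope hs.1).continuousAt.continuousWithinAt) ?_
    rintro s hs
    rw [interior_Ioo] at hs
    rw [(hasDerivAt_iouLogSlope hs.1).deriv]
    have := two_lt_two_sub_mul_exp hs.1 hs.2
    have := exp_sub_one_pos hs.1
    have : 0 < (2 - s) * exp s - 2 := by linarith
    positivity
  simpa [iouLogSlope_log_two] using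
    hmono ⟨ht₀, ht₁.trans hlog2⟩ ⟨log_pos one_lt_two, hlog2⟩ ht₁

lemma hasDerivAt_one_sub_exp_rpow {c L : ℝ} (hc : 0 < c) (hL : 0 < L) :
    HasDerivAt (fun L => (1 - exp (-(c * L))) ^ L)
      ((1 - exp (-(c * L))) ^ L * iouLogSlope (c * L)) L := by
  have hpos := one_sub_exp_neg_pos (mul_pos hc hL)
  have hbase : HasDerivAt (fun L => 1 - exp (-(c * L))) (exp (-(c * L)) * c) L := by
    simpa using (((hasDerivAt_id' L).const_mul c).neg.exp).const_sub 1
  refine (hbase.rpow (hasDerivAt_id' L) hpos).congr_deriv ?_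
  have hexp := (exp_sub_one_pos (mul_pos hc hL)).ne'
  rw [iouLogSlope, rpow_sub hpos, rpow_one, exp_neg] at *
  field_simp
  ring

/-- For `w > 0`, `B > 0`, on `0 < L < (B/w) * log 2` the derivative of
`q̂ L = (1 - exp (-(w*L)/B)) ^ L` is strictly negative; that is, `q̂` is strictly
decreasing on `(0, (B/w) * log 2)`. -/
theorem iou_qhat_strictAntiOn (w B : ℝ) (hw : 0 < w) (hB : 0 < B) :
    (∀ L : ℝ, 0 < L → L < (B / w) * Real.log 2 →
      deriv (fun L : ℝ => (1 - Real.exp (-(w * L) / B)) ^ L) L < 0) ∧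
    StrictAntiOn (fun L : ℝ => (1 - Real.exp (-(w * L) / B)) ^ L)
      (Set.Ioo 0 ((B / w) * Real.log 2)) := by
  have hc : 0 < w / B := div_pos hw hB
  simp only [neg_div, mul_div_right_comm w _ B]
  have hderiv_neg : ∀ L ∈ Set.Ioo 0 ((B / w) * log 2),
      deriv (fun L : ℝ => (1 - exp (-(w / B * L))) ^ L) L < 0 := by
    rintro L ⟨hL₀, hL₁⟩
    have ht : w / B * L < log 2 :=
      calc w / B * L < w / B * (B / w * log 2) := by gcongr
        _ = log 2 := by field_simp
    rw [(hasDerivAt_one_sub_exp_rpow hc hL₀).deriv]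
    exact mul_neg_of_pos_of_neg (rpow_pos_of_pos (one_sub_exp_neg_pos (mul_pos hc hL₀)) L)
      (iouLogSlope_neg (mul_pos hc hL₀) ht)
  refine ⟨fun L hL₀ hL₁ => hderiv_neg L ⟨hL₀, hL₁⟩, ?_⟩
  refine strictAntiOn_of_deriv_neg (convex_Ioo _ _)
    (fun L hL => (hasDerivAt_one_sub_exp_rpow hc hL.1).continuousAt.continuousWithinAt) ?_
  rwa [interior_Ioo]
end

section
/- For w > 0, B > 0, if L > (B/w)·ln 2 then the derivative of q̂(L) = (1 − exp(−w·L/B))^L with respect to L is strictly positive; that is, q̂ is strictly increasing on ((B/w)·ln 2, ∞). -/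
/-!
Put `t = exp (-(w L) / B)`, so that `L w / B = -log t`. Differentiating `(1 - t) ^ L` gives
`(1 - t) ^ (L - 1) * ((1 - t) log (1 - t) - t log t)`, and `L > (B / w) log 2` is exactly
`t < 1 / 2`. For `0 < t < 1 / 2` we have `t log t < (1 - t) log (1 - t)`: the chord slope
`log x / (x - 1)` of the concave `log` is strictly decreasing, and `t < 1 - t`.
-/

open Real Set

theorem mul_log_lt_mul_log_one_sub {t : ℝ} (ht₀ : 0 < t) (ht : t < 1 / 2) :
    t * log t < (1 - t) * log (1 - t) := by
  have h1t : 0 < 1 - t := by linarith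
  have hslope : log (1 - t) / (1 - t - 1) < log t / (t - 1) := by
    simpa using strictConcaveOn_log_Ioi.secant_strict_mono (a := 1)
      (mem_Ioi.2 one_pos) (mem_Ioi.2 ht₀) (mem_Ioi.2 h1t) (by linarith)
      (by linarith) (by linarith)
  rw [show (1 : ℝ) - t - 1 = -t by ring, show t - 1 = -(1 - t) by ring, div_neg, div_neg,
    neg_lt_neg_iff, div_lt_div_iff₀ h1t ht₀] at hslope
  linarith

theorem hasDerivAt_one_sub_exp_rpow_s6 (w B L : ℝ) (h : exp (-(w * L) / B) < 1) :
    HasDerivAt (fun L : ℝ => (1 - exp (-(w * L) / B)) ^ L)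
      ((1 - exp (-(w * L) / B)) ^ (L - 1) *
        ((1 - exp (-(w * L) / B)) * log (1 - exp (-(w * L) / B)) -
          exp (-(w * L) / B) * log (exp (-(w * L) / B)))) L := by
  have hexponent : HasDerivAt (fun x : ℝ => -(w * x) / B) (-w / B) L := by
    simpa using ((hasDerivAt_id L).const_mul w).neg.div_const B
  have hf : (1 - exp (-(w * L) / B)) ≠ 0 := (sub_pos.2 h).ne'
  convert (hexponent.exp.const_sub 1).rpow (hasDerivAt_id' L) (sub_pos.2 h) using 1
  rw [log_exp, rpow_sub_one hf, div_eq_mul_inv]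
  linear_combination ((1 - exp (-(w * L) / B)) ^ L * log (1 - exp (-(w * L) / B))) *
    mul_inv_cancel₀ hf

theorem exp_neg_mul_div_lt_half {w B L : ℝ} (hw : 0 < w) (hB : 0 < B)
    (hL : (B / w) * log 2 < L) : exp (-(w * L) / B) < 1 / 2 := by
  have hlog : log 2 < w * L / B := by
    rw [lt_div_iff₀ hB]
    calc log 2 * B = w * ((B / w) * log 2) := by field_simp
      _ < w * L := mul_lt_mul_of_pos_left hL hw
  calc exp (-(w * L) / B) < exp (-log 2) := exp_lt_exp.2 (by rw [neg_div]; linarith)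
    _ = 1 / 2 := by rw [exp_neg, exp_log two_pos, one_div]

/-- For `w > 0`, `B > 0`, on `L > (B/w) * log 2` the derivative of
`q̂ L = (1 - exp (-(w*L)/B)) ^ L` is strictly positive; that is, `q̂` is strictly
increasing on `((B/w) * log 2, ∞)`. -/
theorem iou_qhat_strictMonoOn (w B : ℝ) (hw : 0 < w) (hB : 0 < B) :
    (∀ L : ℝ, (B / w) * Real.log 2 < L →
      0 < deriv (fun L : ℝ => (1 - Real.exp (-(w * L) / B)) ^ L) L) ∧
    StrictMonoOn (fun L : ℝ => (1 - Real.exp (-(w * L) / B)) ^ L)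
      (Set.Ioi ((B / w) * Real.log 2)) := by
  have hasDerivAt_pos : ∀ L, (B / w) * log 2 < L → ∃ d,
      HasDerivAt (fun L : ℝ => (1 - exp (-(w * L) / B)) ^ L) d L ∧ 0 < d := by
    intro L hL
    have ht := exp_neg_mul_div_lt_half hw hB hL
    exact ⟨_, hasDerivAt_one_sub_exp_rpow_s6 w B L (by linarith),
      mul_pos (rpow_pos_of_pos (by linarith) _)
        (sub_pos.2 (mul_log_lt_mul_log_one_sub (exp_pos _) ht))⟩
  have deriv_pos : ∀ L, (B / w) * log 2 < L →
      0 < deriv (fun L : ℝ => (1 - exp (-(w * L) / B)) ^ L) L := by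
    intro L hL
    obtain ⟨d, hd, hd_pos⟩ := hasDerivAt_pos L hL
    rwa [hd.deriv]
  refine ⟨deriv_pos, strictMonoOn_of_deriv_pos (convex_Ioi _) ?_ ?_⟩
  · intro L hL
    obtain ⟨d, hd, -⟩ := hasDerivAt_pos L hL
    exact hd.continuousAt.continuousWithinAt
  · rw [interior_Ioi]
    exact deriv_pos
end

section
/- Let 0 < p ≤ 1, δ ∈ (0,1), K ≥ 1, and define R_K = ⌈(2pK + (1/2)ln(1/δ) + sqrt((2pK + (1/2)ln(1/δ))² − 4p²K²)) / (2p²)⌉. Then R_K is a real (well-defined) quantity: the expression under the square root, (2pK + (1/2)ln(1/δ))² − 4p²K², is nonnegative, and R_K satisfies p·R_K − sqrt((R_K/2)·ln(1/δ)) ≥ K. -/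
/-!
With `L = log (1/δ) ≥ 0`, the requirement `p R - √(R L / 2) ≥ K` follows from `p R ≥ K` together
with `R L / 2 ≤ (p R - K)²`, i.e. `p² R² - (2 p K + L/2) R + K² ≥ 0`. This quadratic in `R` has
discriminant `(L/2) (4 p K + L/2) ≥ 0`, and the ceiling in `R_K` lies beyond its larger root.
-/

open Real

theorem quadratic_nonneg_of_root_le {a b c x : ℝ} (ha : 0 < a) (hD : 0 ≤ discrim a b c)
    (hx : (-b + √(discrim a b c)) / (2 * a) ≤ x) : 0 ≤ a * (x * x) + b * x + c := by
  have hs : √(discrim a b c) ^ 2 = discrim a b c := sq_sqrt hD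
  have hlin : √(discrim a b c) ≤ 2 * a * x + b := by
    rw [div_le_iff₀ (by positivity)] at hx
    linarith
  have hsq : discrim a b c ≤ (2 * a * x + b) ^ 2 := by
    nlinarith [sqrt_nonneg (discrim a b c)]
  have hcomplete : (2 * a * x + b) ^ 2 - discrim a b c = 4 * a * (a * (x * x) + b * x + c) := by
    unfold discrim
    ring
  nlinarith

theorem sampleSize_discrim_nonneg {p K L : ℝ} (hpK : 0 ≤ p * K) (hL : 0 ≤ L) :
    0 ≤ (2 * p * K + (1 / 2) * L) ^ 2 - 4 * p ^ 2 * K ^ 2 := by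
  have hfactor : (2 * p * K + (1 / 2) * L) ^ 2 - 4 * p ^ 2 * K ^ 2
      = (1 / 2) * L * (4 * (p * K) + (1 / 2) * L) := by ring
  rw [hfactor]
  exact mul_nonneg (by positivity) (by positivity)

theorem le_mul_sub_sqrt_of_sampleSize_le {p K L R : ℝ} (hp : 0 < p) (hK : 0 ≤ K) (hL : 0 ≤ L)
    (hR : (2 * p * K + (1 / 2) * L +
        √((2 * p * K + (1 / 2) * L) ^ 2 - 4 * p ^ 2 * K ^ 2)) / (2 * p ^ 2) ≤ R) :
    K ≤ p * R - √(R / 2 * L) := by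
  have hdiscrim : discrim (p ^ 2) (-(2 * p * K + (1 / 2) * L)) (K ^ 2)
      = (2 * p * K + (1 / 2) * L) ^ 2 - 4 * p ^ 2 * K ^ 2 := by
    unfold discrim
    ring
  have hD := sampleSize_discrim_nonneg (mul_nonneg hp.le hK) hL
  have hquad := quadratic_nonneg_of_root_le (a := p ^ 2) (b := -(2 * p * K + (1 / 2) * L))
    (c := K ^ 2) (x := R) (by positivity) (hdiscrim ▸ hD) (by rwa [hdiscrim, neg_neg])
  have hpR : K ≤ p * R := by
    rw [div_le_iff₀ (by positivity)] at hR
    nlinarith [sqrt_nonneg ((2 * p * K + (1 / 2) * L) ^ 2 - 4 * p ^ 2 * K ^ 2)]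
  have hsqrt : √(R / 2 * L) ≤ p * R - K := by
    rw [sqrt_le_left (by linarith)]
    nlinarith
  linarith

theorem iou_topK_sample_size_general (p δ K : ℝ) (hp0 : 0 < p)
    (hδ : δ ∈ Set.Ioo (0 : ℝ) 1) (hK : 1 ≤ K) :
    0 ≤ (2 * p * K + (1 / 2) * Real.log (1 / δ)) ^ 2 - 4 * p ^ 2 * K ^ 2 ∧
    (let RK : ℝ :=
      ⌈(2 * p * K + (1 / 2) * Real.log (1 / δ) +
          Real.sqrt ((2 * p * K + (1 / 2) * Real.log (1 / δ)) ^ 2 -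
            4 * p ^ 2 * K ^ 2)) / (2 * p ^ 2)⌉₊
     p * RK - Real.sqrt ((RK / 2) * Real.log (1 / δ)) ≥ K) := by
  obtain ⟨hδ0, hδ1⟩ := hδ
  have hL : 0 ≤ log (1 / δ) := log_nonneg (one_le_one_div hδ0 hδ1.le)
  have hK0 : 0 ≤ K := by linarith
  exact ⟨sampleSize_discrim_nonneg (by positivity) hL,
    le_mul_sub_sqrt_of_sampleSize_le hp0 hK0 hL (Nat.le_ceil _)⟩

/-- Well-definedness and correctness of the top-K sample size
`R_K = ⌈(2pK + (1/2)ln(1/δ) + sqrt((2pK + (1/2)ln(1/δ))² − 4p²K²)) / (2p²)⌉`: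
the discriminant is nonnegative and `p * R_K - sqrt ((R_K / 2) * log (1/δ)) ≥ K`. -/
theorem iou_topK_sample_size (p δ K : ℝ) (hp0 : 0 < p) (hp1 : p ≤ 1)
    (hδ : δ ∈ Set.Ioo (0 : ℝ) 1) (hK : 1 ≤ K) :
    0 ≤ (2 * p * K + (1 / 2) * Real.log (1 / δ)) ^ 2 - 4 * p ^ 2 * K ^ 2 ∧
    (let RK : ℝ :=
      ⌈(2 * p * K + (1 / 2) * Real.log (1 / δ) +
          Real.sqrt ((2 * p * K + (1 / 2) * Real.log (1 / δ)) ^ 2 -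
            4 * p ^ 2 * K ^ 2)) / (2 * p ^ 2)⌉₊
     p * RK - Real.sqrt ((RK / 2) * Real.log (1 / δ)) ≥ K) :=
  iou_topK_sample_size_general p δ K hp0 hδ hK
end
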